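/- The fixed point Q*_{B_Π̂^N} of the Multi-Step Optimality Operator satisfies Q*_{B_Π̂^N} ≤ Q* componentwise for any N ≥ 2 and any finite policy set Π̂. -/

import Mathlib

open Finset Filter Topology

/-- A transition kernel: for each state-action pair, a probability distribution over states. -/
def IsKernel {S A : Type*} [Fintype S] (P : S × A → S → ℝ) : Prop :=
  ∀ p, (∀ s', 0 ≤ P p s') ∧ ∑ s', P p s' = 1

/-- A (stochastic) policy: for each state, a probability distribution over actions. -/
def IsPolicy {S A : Type*} [Fintype A] (π : S → A → ℝ) : Prop :=
  ∀ s, (∀ a, 0 ≤ π s a) ∧ ∑ a, π s a = 1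

/-- Bellman optimality operator: (B Q)(s,a) = r(s,a) + γ ∑_{s'} P(s'|s,a) max_{a'} Q(s',a'). -/
noncomputable def bOpt {S A : Type*} [Fintype S] [Fintype A] [Nonempty A]
    (P : S × A → S → ℝ) (r : S × A → ℝ) (γ : ℝ) (Q : S × A → ℝ) : S × A → ℝ :=
  fun p => r p + γ * ∑ s', P p s' * (univ.sup' univ_nonempty fun a' => Q (s', a'))

/-- Bellman expectation operator for policy π:
    (B^π Q)(s,a) = r(s,a) + γ ∑_{s'} P(s'|s,a) ∑_{a'} π(a'|s') Q(s',a'). -/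
noncomputable def bExp {S A : Type*} [Fintype S] [Fintype A]
    (P : S × A → S → ℝ) (r : S × A → ℝ) (γ : ℝ) (π : S → A → ℝ) (Q : S × A → ℝ) :
    S × A → ℝ :=
  fun p => r p + γ * ∑ s', P p s' * ∑ a', π s' a' * Q (s', a')

/-- Greedy Multi-Step Bellman Operator: G Q = max_{π ∈ Π̂} max_{1 ≤ n ≤ N} (B^π)^{n-1} B Q,
    componentwise, over a finite nonempty policy set indexed by ι. -/
noncomputable def gOp {S A : Type*} [Fintype S] [Fintype A] [Nonempty A]
    (P : S × A → S → ℝ) (r : S × A → ℝ) (γ : ℝ)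
    {ι : Type*} [Fintype ι] [Nonempty ι] (pol : ι → S → A → ℝ)
    (N : ℕ) (hN : 1 ≤ N) (Q : S × A → ℝ) : S × A → ℝ :=
  fun p => univ.sup' univ_nonempty fun i =>
    (Icc 1 N).sup' (nonempty_Icc.mpr hN) fun n =>
      ((bExp P r γ (pol i))^[n - 1] (bOpt P r γ Q)) p

/-- Multi-Step Optimality Operator: B Q = max over policies of (B^pi)^[N-1] (bOpt Q),
    i.e. roll out the policy for N steps and bootstrap the last step with a max. -/
noncomputable def mOp {S A : Type*} [Fintype S] [Fintype A] [Nonempty A]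
    (P : S × A → S → ℝ) (r : S × A → ℝ) (γ : ℝ)
    {ι : Type*} [Fintype ι] [Nonempty ι] (pol : ι → S → A → ℝ)
    (N : ℕ) (Q : S × A → ℝ) : S × A → ℝ :=
  fun p => Finset.univ.sup' Finset.univ_nonempty fun i =>
    ((bExp P r γ (pol i))^[N - 1] (bOpt P r γ Q)) p

/-!
`Q*` is a supersolution of the multi-step operator: a policy rollout bootstrapped with `Q*`
never beats `Q*`. The operator is monotone and adds `κ * c`, with `κ = γ ^ (N - 1) * γ < 1`,
when a constant `c` is added to its argument. So if `M > 0` were the largest excess of its fixed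
point over `Q*`, applying the operator once would bound that excess by `κ * M < M`.
-/

theorem le_of_isFixedPt_of_map_le {X : Type*} [Finite X] {T : (X → ℝ) → X → ℝ} {κ : ℝ}
    (hκ : κ < 1) (hT : Monotone T)
    (hT_add : ∀ Q (c : ℝ), 0 ≤ c → T (Q + fun _ => c) ≤ T Q + fun _ => κ * c)
    {Qfix Qsup : X → ℝ} (hfix : Function.IsFixedPt T Qfix) (hsup : T Qsup ≤ Qsup) :
    Qfix ≤ Qsup := by
  cases isEmpty_or_nonempty X
  · exact fun x => isEmptyElim x
  obtain ⟨x₀, hx₀⟩ := Finite.exists_max fun x => Qfix x - Qsup x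
  set M := Qfix x₀ - Qsup x₀
  intro x
  by_contra hnot
  have hM : 0 < M := by linarith [hx₀ x, not_le.mp hnot]
  have hle : Qfix ≤ Qsup + fun _ => M := fun y => by
    have := hx₀ y
    simp only [Pi.add_apply]
    linarith
  have hcontract : Qfix x₀ ≤ Qsup x₀ + κ * M :=
    calc Qfix x₀ = T Qfix x₀ := by rw [hfix.eq]
      _ ≤ T (Qsup + fun _ => M) x₀ := hT hle x₀
      _ ≤ T Qsup x₀ + κ * M := hT_add Qsup M hM.le x₀
      _ ≤ Qsup x₀ + κ * M := by gcongr; exact hsup x₀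
  linarith [mul_lt_of_lt_one_left hM hκ]

theorem sum_mul_add_const_of_sum_eq_one {X : Type*} [Fintype X] {w : X → ℝ}
    (hw : ∑ x, w x = 1) (f : X → ℝ) (c : ℝ) :
    ∑ x, w x * (f x + c) = ∑ x, w x * f x + c := by
  simp only [mul_add, sum_add_distrib, ← sum_mul, hw, one_mul]

section Bellman

variable {S A : Type*} [Fintype S] [Fintype A]
  {P : S × A → S → ℝ} (r : S × A → ℝ) {γ : ℝ}

theorem bExp_mono (hγ : 0 ≤ γ) (hP : IsKernel P) {π : S → A → ℝ} (hπ : IsPolicy π) :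
    Monotone (bExp P r γ π) := fun Q₁ Q₂ hQ p => by
  unfold bExp
  gcongr with s' _ a' _
  · exact (hP p).1 s'
  · exact (hπ s').1 a'
  · exact hQ _

theorem bExp_add_const (hP : IsKernel P) {π : S → A → ℝ} (hπ : IsPolicy π)
    (Q : S × A → ℝ) (c : ℝ) :
    bExp P r γ π (Q + fun _ => c) = bExp P r γ π Q + fun _ => γ * c := by
  funext p
  simp only [bExp, Pi.add_apply, sum_mul_add_const_of_sum_eq_one (hπ _).2,
    sum_mul_add_const_of_sum_eq_one (hP p).2]
  ring

theorem bExp_iterate_add_const (hP : IsKernel P) {π : S → A → ℝ} (hπ : IsPolicy π)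
    (n : ℕ) (Q : S × A → ℝ) (c : ℝ) :
    (bExp P r γ π)^[n] (Q + fun _ => c) = (bExp P r γ π)^[n] Q + fun _ => γ ^ n * c := by
  induction n generalizing c with
  | zero => simp
  | succ n ih =>
    rw [Function.iterate_succ_apply', Function.iterate_succ_apply', ih,
      bExp_add_const r hP hπ, pow_succ', mul_assoc]

variable [Nonempty A]

theorem bOpt_mono (hγ : 0 ≤ γ) (hP : IsKernel P) : Monotone (bOpt P r γ) :=
    fun Q₁ Q₂ hQ p => by
  unfold bOpt
  gcongr with s' _
  · exact (hP p).1 s'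
  · exact hQ _

theorem bOpt_add_const (hP : IsKernel P) (Q : S × A → ℝ) (c : ℝ) :
    bOpt P r γ (Q + fun _ => c) = bOpt P r γ Q + fun _ => γ * c := by
  funext p
  simp only [bOpt, Pi.add_apply, ← sup'_add, sum_mul_add_const_of_sum_eq_one (hP p).2]
  ring

theorem bExp_le_bOpt (hγ : 0 ≤ γ) (hP : IsKernel P) {π : S → A → ℝ} (hπ : IsPolicy π)
    (Q : S × A → ℝ) : bExp P r γ π Q ≤ bOpt P r γ Q := fun p => by
  unfold bExp bOpt
  gcongr with s' _
  · exact (hP p).1 s'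
  · calc ∑ a', π s' a' * Q (s', a')
        ≤ ∑ a', π s' a' * univ.sup' univ_nonempty fun a => Q (s', a) := by
          gcongr with a' _
          · exact (hπ s').1 a'
          · exact le_sup' (fun a => Q (s', a)) (mem_univ a')
      _ = univ.sup' univ_nonempty fun a => Q (s', a) := by rw [← sum_mul, (hπ s').2, one_mul]

end Bellman

section MultiStep

variable {S A : Type*} [Fintype S] [Fintype A] [Nonempty A]
  {P : S × A → S → ℝ} (r : S × A → ℝ) {γ : ℝ}
  {ι : Type*} [Fintype ι] [Nonempty ι] {pol : ι → S → A → ℝ}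

theorem mOp_mono (hγ : 0 ≤ γ) (hP : IsKernel P) (hpol : ∀ i, IsPolicy (pol i)) (N : ℕ) :
    Monotone (mOp P r γ pol N) := fun _ _ hQ p =>
  sup'_mono_fun fun i _ => (bExp_mono r hγ hP (hpol i)).iterate (N - 1) (bOpt_mono r hγ hP hQ) p

theorem mOp_add_const (hP : IsKernel P) (hpol : ∀ i, IsPolicy (pol i)) (N : ℕ)
    (Q : S × A → ℝ) (c : ℝ) :
    mOp P r γ pol N (Q + fun _ => c) = mOp P r γ pol N Q + fun _ => γ ^ (N - 1) * γ * c := by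
  funext p
  simp only [mOp, Pi.add_apply, sup'_add]
  refine sup'_congr _ rfl fun i _ => ?_
  rw [bOpt_add_const r hP, bExp_iterate_add_const r hP (hpol i), Pi.add_apply, mul_assoc]

theorem mOp_le_of_bOpt_le (hγ : 0 ≤ γ) (hP : IsKernel P) (hpol : ∀ i, IsPolicy (pol i))
    (N : ℕ) {Q : S × A → ℝ} (hQ : bOpt P r γ Q ≤ Q) : mOp P r γ pol N Q ≤ Q := fun p =>
  sup'_le _ _ fun i _ => by
    have hmono := bExp_mono r hγ hP (hpol i)
    have hbExp_le : bExp P r γ (pol i) Q ≤ Q := (bExp_le_bOpt r hγ hP (hpol i) Q).trans hQ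
    calc (bExp P r γ (pol i))^[N - 1] (bOpt P r γ Q) p
        ≤ (bExp P r γ (pol i))^[N - 1] Q p := hmono.iterate (N - 1) hQ p
      _ ≤ Q p := by
        simpa using Function.Commute.id_right.iterate_le_of_map_le hmono monotone_id hbExp_le
          (N - 1) p

end MultiStep

theorem multistep_optimality_fixed_point_le_general
    {S A : Type*} [Fintype S] [Fintype A] [Nonempty A]
    (P : S × A → S → ℝ) (r : S × A → ℝ) (γ : ℝ) (hγ0 : 0 < γ) (hγ1 : γ < 1)
    (hP : IsKernel P)
    {ι : Type*} [Fintype ι] [Nonempty ι]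
    (pol : ι → S → A → ℝ) (hpol : ∀ i, IsPolicy (pol i))
    (N : ℕ)
    (Qstar : S × A → ℝ) (hQ : bOpt P r γ Qstar = Qstar)
    (Qfix : S × A → ℝ) (hQfix : mOp P r γ pol N Qfix = Qfix) :
    ∀ p, Qfix p ≤ Qstar p := by
  have hcontract : γ ^ (N - 1) * γ < 1 := by
    rw [← pow_succ]
    exact pow_lt_one₀ hγ0.le hγ1 (Nat.succ_ne_zero _)
  exact le_of_isFixedPt_of_map_le hcontract (mOp_mono r hγ0.le hP hpol N)
    (fun Q c _ => (mOp_add_const r hP hpol N Q c).le) hQfix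
    (mOp_le_of_bOpt_le r hγ0.le hP hpol N hQ.le)

/-- the fixed point of the Multi-Step Optimality Operator is ≤ Q*
    componentwise, for any N ≥ 2 and any finite policy set. -/
theorem multistep_optimality_fixed_point_le
    {S A : Type*} [Fintype S] [Fintype A] [Nonempty S] [Nonempty A]
    (P : S × A → S → ℝ) (r : S × A → ℝ) (γ : ℝ) (hγ0 : 0 < γ) (hγ1 : γ < 1)
    (hP : IsKernel P)
    {ι : Type*} [Fintype ι] [Nonempty ι]
    (pol : ι → S → A → ℝ) (hpol : ∀ i, IsPolicy (pol i))
    (N : ℕ) (hN : 2 ≤ N)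
    (Qstar : S × A → ℝ) (hQ : bOpt P r γ Qstar = Qstar)
    (Qfix : S × A → ℝ) (hQfix : mOp P r γ pol N Qfix = Qfix) :
    ∀ p, Qfix p ≤ Qstar p :=
  multistep_optimality_fixed_point_le_general P r γ hγ0 hγ1 hP pol hpol N Qstar hQ Qfix hQfix
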